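/- arXiv:1304.6746 — 5 statements merged into one kernel-verified Lean document; each statement's English description precedes it below -/
import Mathlib

section
/- Let Σ be a diagonal k×k matrix with positive diagonal entries σ₁₁,…,σ_kk, and let f(x) = x₁^{α₁}·x₂^{α₂}···x_k^{α_k} with nonnegative real exponents α₁,…,α_k that are not all zero. Then W_{f,Σ} is distributed as (1/(α₁+···+α_k)²)·χ²₁; equivalently, if X₁,…,X_k are independent with X_i ~ N(0,σ_ii), then (α₁²σ₁₁/X₁² + ··· + α_k²σ_kk/X_k²)^{-1} has the distribution of Z²/(α₁+···+α_k)² for Z a standard normal random variable. -/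
open MeasureTheory ProbabilityTheory Matrix MvPolynomial Real

noncomputable section

/-- The distribution of a vector of independent standard normal random variables. -/
def stdGaussian (ι : Type*) [Fintype ι] : Measure (ι → ℝ) :=
  Measure.pi fun _ => gaussianReal 0 1

/-- `μ` is the distribution of a centered Gaussian random vector with covariance matrix `S`,
i.e. `μ` is the law of `A Z` for a vector `Z` of i.i.d. standard normals with `A Aᵀ = S`. -/
def IsCenteredGaussian {ι : Type*} [Fintype ι] (μ : Measure (ι → ℝ))
    (S : Matrix ι ι ℝ) : Prop :=
  ∃ A : Matrix ι ι ℝ, A * Aᵀ = S ∧ μ = (stdGaussian ι).map A.mulVec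

/-- The gradient of a polynomial. -/
def polyGrad {ι : Type*} [Fintype ι] (f : MvPolynomial ι ℝ) (x : ι → ℝ) : ι → ℝ :=
  fun i => eval x (pderiv i f)

/-- The Wald ratio `W_{f,S}(x) = f(x)² / (∇f(x)ᵀ S ∇f(x))`. -/
def waldRV {ι : Type*} [Fintype ι] (f : MvPolynomial ι ℝ) (S : Matrix ι ι ℝ)
    (x : ι → ℝ) : ℝ :=
  (eval x f) ^ 2 / (polyGrad f x ⬝ᵥ S.mulVec (polyGrad f x))

/-- The chi-square distribution with `k` degrees of freedom. -/
def chiSq (k : ℕ) : Measure ℝ :=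
  (stdGaussian (Fin k)).map fun z => ∑ i, (z i) ^ 2


/-!
For `X ~ N(0, v)` and `a, s ≥ 0` one has `E exp(-s a² v / X²) = exp(-a √(2s))`: this is the integral
`∫ exp(-b x² - c / x²) dx = √(π / b) exp(-2 √(b c))`, which the Cauchy–Schlömilch substitution
`u = x - d / x` reduces to the Gaussian integral. By independence the Laplace transform of
`∑ αᵢ² σᵢ / Xᵢ²` is therefore `exp(-(∑ αᵢ) √(2s))`, the Laplace transform of `(∑ αᵢ)² / Z²`.
A law on `[0, ∞)` is determined by its Laplace transform (after `x ↦ exp(-x)` these are the moments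
of a law on `[0, 1]`, which determine it by Weierstrass approximation), so `∑ αᵢ² σᵢ / Xᵢ²` and
`(∑ αᵢ)² / Z²` have the same law, and so do their reciprocals.
-/

open Set
open scoped NNReal

lemma hasDerivAt_sub_div (d : ℝ) {x : ℝ} (hx : x ≠ 0) :
    HasDerivAt (fun x => x - d / x) (1 + d / x ^ 2) x := by
  have := (hasDerivAt_id' x).fun_sub ((hasDerivAt_inv hx).const_mul d)
  simp only [← div_eq_mul_inv, mul_neg, sub_neg_eq_add] at this
  exact this

lemma hasDerivAt_div (d : ℝ) {x : ℝ} (hx : x ≠ 0) :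
    HasDerivAt (fun x => d / x) (-(d / x ^ 2)) x := by
  have := (hasDerivAt_inv hx).const_mul d
  simp only [← div_eq_mul_inv, mul_neg] at this
  exact this

section CauchySchlomilch

variable {d : ℝ}

lemma injOn_sub_div (hd : 0 ≤ d) : InjOn (fun x => x - d / x) (Ioi 0) := by
  intro a (ha : 0 < a) b (hb : 0 < b) (hab : a - d / a = b - d / b)
  have key : (a - b) * (a * b + d) = ((a - d / a) - (b - d / b)) * (a * b) := by
    field_simp
    ring
  rw [hab, sub_self, zero_mul, mul_eq_zero] at key
  rcases key with h | h
  · linarith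
  · nlinarith [mul_pos ha hb]

lemma image_sub_div_Ioi (hd : 0 < d) : (fun x => x - d / x) '' Ioi 0 = univ := by
  refine eq_univ_of_forall fun y => ?_
  -- the positive root of `x ^ 2 - y x - d = 0`
  set r := √(y ^ 2 + 4 * d)
  have hr : r ^ 2 = y ^ 2 + 4 * d := sq_sqrt (by positivity)
  have hyr : 0 < y + r := by nlinarith [sqrt_nonneg (y ^ 2 + 4 * d), neg_abs_le y, sq_abs y]
  refine ⟨(y + r) / 2, by simp only [mem_Ioi]; linarith, ?_⟩
  field_simp
  linear_combination hr

lemma injOn_div (hd : d ≠ 0) : InjOn (fun x => d / x) (Ioi 0) := by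
  intro a _ b _ (hab : d / a = d / b)
  simpa [div_eq_mul_inv, hd] using hab

lemma image_div_Ioi (hd : 0 < d) : (fun x => d / x) '' Ioi 0 = Ioi 0 := by
  ext y
  constructor
  · rintro ⟨x, hx, rfl⟩
    exact div_pos hd hx
  · intro (hy : 0 < y)
    exact ⟨d / y, div_pos hd hy, by field_simp⟩

/-- The Cauchy–Schlömilch substitution. -/
theorem integral_Ioi_comp_sub_div_of_even (hd : 0 < d) {g : ℝ → ℝ} (hg : Integrable g)
    (heven : Function.Even g) :
    ∫ x in Ioi 0, g (x - d / x) = (∫ u, g u) / 2 := by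
  set h : ℝ → ℝ := fun x => g (x - d / x)
  have hφ : ∀ x ∈ Ioi (0 : ℝ), HasDerivWithinAt (fun x => x - d / x) (1 + d / x ^ 2) (Ioi 0) x :=
    fun x hx => (hasDerivAt_sub_div d (ne_of_gt hx)).hasDerivWithinAt
  have hψ : ∀ x ∈ Ioi (0 : ℝ), HasDerivWithinAt (fun x => d / x) (-(d / x ^ 2)) (Ioi 0) x :=
    fun x hx => (hasDerivAt_div d (ne_of_gt hx)).hasDerivWithinAt
  have habs : ∀ x ∈ Ioi (0 : ℝ), |1 + d / x ^ 2| • g (x - d / x) = (1 + d / x ^ 2) * h x :=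
    fun x (hx : 0 < x) => by rw [abs_of_pos (by positivity), smul_eq_mul]
  have hsub : ∫ u, g u = ∫ x in Ioi 0, (1 + d / x ^ 2) * h x := by
    rw [← setIntegral_univ, ← image_sub_div_Ioi hd,
      integral_image_eq_integral_abs_deriv_smul measurableSet_Ioi hφ (injOn_sub_div hd.le)]
    exact setIntegral_congr_fun measurableSet_Ioi habs
  -- `x ↦ d / x` preserves `Ioi 0` and turns `x - d / x` into its negative
  have hinv : ∫ x in Ioi 0, d / x ^ 2 * h x = ∫ x in Ioi 0, h x := by
    conv_rhs => rw [← image_div_Ioi hd]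
    rw [integral_image_eq_integral_abs_deriv_smul measurableSet_Ioi hψ (injOn_div hd.ne')]
    refine setIntegral_congr_fun measurableSet_Ioi fun x (hx : 0 < x) => ?_
    have : d / x - d / (d / x) = -(x - d / x) := by field_simp; ring
    rw [smul_eq_mul, abs_neg, abs_of_pos (by positivity)]
    change _ = _ * g (d / x - d / (d / x))
    rw [this, heven]
  have hint : IntegrableOn (fun x => (1 + d / x ^ 2) * h x) (Ioi 0) := by
    have := (integrableOn_image_iff_integrableOn_abs_deriv_smul measurableSet_Ioi hφ
      (injOn_sub_div hd.le) g).mp (by rw [image_sub_div_Ioi hd]; exact hg.integrableOn)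
    exact this.congr_fun habs measurableSet_Ioi
  have hint_h : IntegrableOn h (Ioi 0) := by
    have hw : Continuous fun x : ℝ => x ^ 2 / (x ^ 2 + d) :=
      by fun_prop (disch := exact fun x => by positivity)
    have : IntegrableOn (fun x => x ^ 2 / (x ^ 2 + d) * ((1 + d / x ^ 2) * h x)) (Ioi 0) := by
      refine hint.bdd_mul (c := 1) hw.aestronglyMeasurable (ae_of_all _ fun x => ?_)
      rw [Real.norm_eq_abs, abs_of_nonneg (by positivity), div_le_one (by positivity)]
      linarith
    refine this.congr_fun (fun x (hx : 0 < x) => ?_) measurableSet_Ioi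
    field_simp
  have hsplit : ∫ x in Ioi 0, d / x ^ 2 * h x
      = (∫ x in Ioi 0, (1 + d / x ^ 2) * h x) - ∫ x in Ioi 0, h x := by
    rw [← integral_sub hint hint_h]
    congr 1 with x
    ring
  linarith

end CauchySchlomilch

theorem integral_eq_two_mul_integral_Ioi_of_even {f : ℝ → ℝ} (hf : Integrable f)
    (heven : Function.Even f) : ∫ x, f x = 2 * ∫ x in Ioi 0, f x := by
  have hIic : ∫ x in Iic 0, f x = ∫ x in Ioi 0, f x := by
    rw [← neg_zero, ← integral_comp_neg_Ioi, neg_zero]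
    exact setIntegral_congr_fun measurableSet_Ioi fun x _ => heven x
  rw [← integral_add_compl measurableSet_Iic hf, compl_Iic, hIic]
  ring

theorem integral_exp_neg_mul_sq_sub_div_sq {b c : ℝ} (hb : 0 < b) (hc : 0 ≤ c) :
    ∫ x, exp (-b * x ^ 2 - c / x ^ 2) = √(π / b) * exp (-2 * √(b * c)) := by
  rcases hc.eq_or_lt with rfl | hc
  · simp only [zero_div, sub_zero, mul_zero, sqrt_zero, exp_zero, mul_one]
    exact integral_gaussian b
  set d := √(c / b)
  have hd : 0 < d := sqrt_pos.mpr (div_pos hc hb)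
  have hbd : b * d = √(b * c) := by
    rw [show b * d = √(b ^ 2 * (c / b)) by rw [sqrt_mul (sq_nonneg _), sqrt_sq hb.le]]
    congr 1
    field_simp
  have hbd2 : b * d ^ 2 = c := by
    rw [sq_sqrt (div_pos hc hb).le]
    field_simp
  -- completing the square in `x - d / x`
  have hsq : ∀ x ∈ Ioi (0 : ℝ),
      exp (-b * x ^ 2 - c / x ^ 2) = exp (-2 * √(b * c)) * exp (-b * (x - d / x) ^ 2) := by
    intro x (hx : 0 < x)
    rw [← exp_add, ← hbd, ← hbd2]
    congr 1
    field_simp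
    ring
  have hint : Integrable fun x => exp (-b * x ^ 2 - c / x ^ 2) := by
    refine (integrable_exp_neg_mul_sq hb).mono' (by fun_prop) (ae_of_all _ fun x => ?_)
    rw [Real.norm_eq_abs, abs_of_pos (exp_pos _), exp_le_exp]
    linarith [div_nonneg hc.le (sq_nonneg x)]
  rw [integral_eq_two_mul_integral_Ioi_of_even hint (fun x => by simp),
    setIntegral_congr_fun measurableSet_Ioi hsq, integral_const_mul,
    integral_Ioi_comp_sub_div_of_even hd (integrable_exp_neg_mul_sq hb) (fun x => by simp),
    integral_gaussian]
  ring

theorem integral_exp_neg_div_sq_gaussianReal {v : ℝ≥0} (hv : v ≠ 0) {c : ℝ} (hc : 0 ≤ c) :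
    ∫ x, exp (-(c / x ^ 2)) ∂gaussianReal 0 v = exp (-√(2 * c / v)) := by
  have hv' : (0 : ℝ) < v := by positivity
  rw [integral_gaussianReal_eq_integral_smul hv]
  have hpdf : ∀ x, gaussianPDFReal 0 v x • exp (-(c / x ^ 2))
      = (√(2 * π * v))⁻¹ * exp (-(2 * (v : ℝ))⁻¹ * x ^ 2 - c / x ^ 2) := by
    intro x
    rw [gaussianPDFReal, smul_eq_mul, mul_assoc, ← exp_add]
    congr 2
    ring
  simp_rw [hpdf]
  rw [integral_const_mul, integral_exp_neg_mul_sq_sub_div_sq (by positivity) hc]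
  have h1 : √(π / (2 * (v : ℝ))⁻¹) = √(2 * π * v) := by congr 1; field_simp
  have h2 : 2 * √((2 * (v : ℝ))⁻¹ * c) = √(2 * c / v) := by
    rw [show 2 * √((2 * (v : ℝ))⁻¹ * c) = √(2 ^ 2 * ((2 * (v : ℝ))⁻¹ * c)) by
      rw [sqrt_mul (sq_nonneg _), sqrt_sq zero_le_two]]
    congr 1
    field_simp
  rw [h1, ← mul_assoc, inv_mul_cancel₀ (by positivity), one_mul, ← h2, neg_mul]

section Uniqueness

variable {μ ν : Measure ℝ} [IsFiniteMeasure μ] [IsFiniteMeasure ν]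

lemma Continuous.integrable_of_ae_mem_Icc {f : ℝ → ℝ} (hf : Continuous f) {a b : ℝ}
    (hμ : ∀ᵐ x ∂μ, x ∈ Icc a b) : Integrable f μ := by
  obtain ⟨C, hC⟩ := isCompact_Icc.exists_bound_of_continuousOn hf.continuousOn
  exact .of_bound hf.aestronglyMeasurable C (hμ.mono hC)

lemma integral_eval_eq_of_integral_pow_eq {a b : ℝ} (hμ : ∀ᵐ x ∂μ, x ∈ Icc a b)
    (hν : ∀ᵐ x ∂ν, x ∈ Icc a b) (h : ∀ n : ℕ, ∫ x, x ^ n ∂μ = ∫ x, x ^ n ∂ν) (p : Polynomial ℝ) :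
    ∫ x, p.eval x ∂μ = ∫ x, p.eval x ∂ν := by
  simp_rw [Polynomial.eval_eq_sum_range]
  rw [integral_finsetSum _ fun n _ => ((continuous_pow n).integrable_of_ae_mem_Icc hμ).const_mul _,
    integral_finsetSum _ fun n _ => ((continuous_pow n).integrable_of_ae_mem_Icc hν).const_mul _]
  simp_rw [integral_const_mul, h]

lemma dist_integral_eval_le {a b ε : ℝ} (hμ : ∀ᵐ x ∂μ, x ∈ Icc a b) {f : ℝ → ℝ}
    (hf : Continuous f) {p : Polynomial ℝ} (hp : ∀ x ∈ Icc a b, |p.eval x - f x| < ε) :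
    dist (∫ x, f x ∂μ) (∫ x, p.eval x ∂μ) ≤ ε * μ.real univ := by
  rw [dist_eq_norm, ← integral_sub (hf.integrable_of_ae_mem_Icc hμ)
    (p.continuous.integrable_of_ae_mem_Icc hμ)]
  refine norm_integral_le_of_norm_le_const (hμ.mono fun x hx => ?_)
  rw [Real.norm_eq_abs, abs_sub_comm]
  exact (hp x hx).le

theorem MeasureTheory.Measure.ext_of_integral_pow_eq {a b : ℝ} (hμ : ∀ᵐ x ∂μ, x ∈ Icc a b)
    (hν : ∀ᵐ x ∂ν, x ∈ Icc a b) (h : ∀ n : ℕ, ∫ x, x ^ n ∂μ = ∫ x, x ^ n ∂ν) : μ = ν := by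
  refine ext_of_forall_integral_eq_of_IsFiniteMeasure fun f => eq_of_forall_dist_le fun ε hε => ?_
  set M := μ.real univ + ν.real univ + 1
  have hM : 0 < M := by positivity
  obtain ⟨p, hp⟩ := exists_polynomial_near_of_continuousOn a b f f.continuous.continuousOn
    (ε / M) (by positivity)
  calc dist (∫ x, f x ∂μ) (∫ x, f x ∂ν)
      ≤ dist (∫ x, f x ∂μ) (∫ x, p.eval x ∂μ) + dist (∫ x, f x ∂ν) (∫ x, p.eval x ∂ν) := by
        rw [integral_eval_eq_of_integral_pow_eq hμ hν h p, dist_comm (∫ x, f x ∂ν)]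
        exact dist_triangle _ _ _
    _ ≤ ε / M * μ.real univ + ε / M * ν.real univ :=
        add_le_add (dist_integral_eval_le hμ f.continuous hp)
          (dist_integral_eval_le hν f.continuous hp)
    _ ≤ ε := by
        rw [← mul_add, div_mul_eq_mul_div, div_le_iff₀ hM]
        exact mul_le_mul_of_nonneg_left (by linarith) hε.le

theorem MeasureTheory.Measure.ext_of_integral_exp_neg_mul_eq (hμ : ∀ᵐ x ∂μ, 0 ≤ x)
    (hν : ∀ᵐ x ∂ν, 0 ≤ x)
    (h : ∀ s, 0 ≤ s → ∫ x, exp (-(s * x)) ∂μ = ∫ x, exp (-(s * x)) ∂ν) : μ = ν := by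
  -- `exp (-x)` maps `[0, ∞)` into `[0, 1]` and turns the Laplace transform into moments
  have hT : MeasurableEmbedding fun x : ℝ => exp (-x) :=
    (by fun_prop : Continuous fun x : ℝ => exp (-x)).measurableEmbedding
      fun x y hxy => neg_injective (exp_injective hxy)
  have hIcc : ∀ {ξ : Measure ℝ}, (∀ᵐ x ∂ξ, 0 ≤ x) →
      ∀ᵐ y ∂ξ.map (fun x => exp (-x)), y ∈ Icc 0 1 := fun hξ =>
    hT.ae_map_iff.mpr (hξ.mono fun x hx => ⟨(exp_pos _).le, exp_le_one_iff.mpr (by linarith)⟩)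
  have hmom : ∀ n : ℕ, ∫ y, y ^ n ∂μ.map (fun x => exp (-x))
      = ∫ y, y ^ n ∂ν.map (fun x => exp (-x)) := by
    intro n
    rw [hT.integral_map, hT.integral_map]
    simp_rw [← exp_nat_mul, mul_neg]
    exact h n n.cast_nonneg
  rw [← hT.comap_map μ, ← hT.comap_map ν, Measure.ext_of_integral_pow_eq (hIcc hμ) (hIcc hν) hmom]

end Uniqueness

theorem integral_exp_neg_mul_sq_mul_div_sq_gaussianReal {v : ℝ} (hv : 0 < v) {a s : ℝ}
    (ha : 0 ≤ a) (hs : 0 ≤ s) :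
    ∫ x, exp (-(s * (a ^ 2 * v / x ^ 2))) ∂gaussianReal 0 v.toNNReal = exp (-(a * √(2 * s))) := by
  simp_rw [← mul_div_assoc]
  rw [integral_exp_neg_div_sq_gaussianReal (by simpa using hv) (by positivity),
    coe_toNNReal _ hv.le]
  congr 2
  rw [show 2 * (s * (a ^ 2 * v)) / v = a ^ 2 * (2 * s) by field_simp, sqrt_mul (sq_nonneg a),
    sqrt_sq ha]

section IndependentGaussians

variable {ι : Type*} [Fintype ι] {σ α : ι → ℝ}

theorem integral_exp_neg_mul_sum_div_sq_pi_gaussianReal (hσ : ∀ i, 0 < σ i) (hα : ∀ i, 0 ≤ α i)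
    {s : ℝ} (hs : 0 ≤ s) :
    ∫ x, exp (-(s * ∑ i, α i ^ 2 * σ i / x i ^ 2))
        ∂Measure.pi (fun i => gaussianReal 0 (σ i).toNNReal) = exp (-((∑ i, α i) * √(2 * s))) := by
  calc _ = ∏ i, ∫ y, exp (-(s * (α i ^ 2 * σ i / y ^ 2))) ∂gaussianReal 0 (σ i).toNNReal := by
        simp_rw [Finset.mul_sum, ← Finset.sum_neg_distrib, exp_sum]
        exact integral_fintype_prod_eq_prod fun i y => exp (-(s * (α i ^ 2 * σ i / y ^ 2)))
    _ = exp (-((∑ i, α i) * √(2 * s))) := by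
        simp_rw [integral_exp_neg_mul_sq_mul_div_sq_gaussianReal (hσ _) (hα _) hs]
        rw [← exp_sum, Finset.sum_neg_distrib, ← Finset.sum_mul]

theorem map_sum_div_sq_pi_gaussianReal (hσ : ∀ i, 0 < σ i) (hα : ∀ i, 0 ≤ α i) :
    (Measure.pi fun i => gaussianReal 0 (σ i).toNNReal).map (fun x => ∑ i, α i ^ 2 * σ i / x i ^ 2)
      = (gaussianReal 0 1).map fun z => (∑ i, α i) ^ 2 / z ^ 2 := by
  have hS : Measurable fun x : ι → ℝ => ∑ i, α i ^ 2 * σ i / x i ^ 2 := by fun_prop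
  have hR : Measurable fun z : ℝ => (∑ i, α i) ^ 2 / z ^ 2 := by fun_prop
  refine Measure.ext_of_integral_exp_neg_mul_eq ?_ ?_ fun s hs => ?_
  · refine (ae_map_iff hS.aemeasurable measurableSet_Ici).mpr (ae_of_all _ fun x => ?_)
    exact Finset.sum_nonneg fun i _ => div_nonneg (mul_nonneg (sq_nonneg _) (hσ i).le) (sq_nonneg _)
  · exact (ae_map_iff hR.aemeasurable measurableSet_Ici).mpr (ae_of_all _ fun z => by positivity)
  rw [integral_map hS.aemeasurable (by fun_prop), integral_map hR.aemeasurable (by fun_prop),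
    integral_exp_neg_mul_sum_div_sq_pi_gaussianReal hσ hα hs]
  simpa using (integral_exp_neg_mul_sq_mul_div_sq_gaussianReal one_pos
    (Finset.sum_nonneg fun i _ => hα i) hs).symm

end IndependentGaussians

theorem monomial_diagonal_chiSq_general
    {k : ℕ} (σ : Fin k → ℝ) (hσ : ∀ i, 0 < σ i)
    (α : Fin k → ℝ) (hα : ∀ i, 0 ≤ α i) :
    (Measure.pi fun i => gaussianReal 0 (σ i).toNNReal).map
        (fun x => (∑ i, α i ^ 2 * σ i / (x i) ^ 2)⁻¹) =
      (gaussianReal 0 1).map (fun z => z ^ 2 / (∑ i, α i) ^ 2) := by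
  have hinv := congrArg (Measure.map Inv.inv) (map_sum_div_sq_pi_gaussianReal hσ hα)
  rw [Measure.map_map measurable_inv (by fun_prop),
    Measure.map_map measurable_inv (by fun_prop)] at hinv
  simpa only [Function.comp_def, inv_div] using hinv

/-- For a diagonal covariance matrix with positive diagonal entries
`σ₁₁, …, σ_kk` and `f(x) = x₁^{α₁} ⋯ x_k^{α_k}` with nonnegative real exponents, not all
zero, `W_{f,Σ} ~ (α₁ + ⋯ + α_k)⁻² χ²₁`; equivalently, for independent `Xᵢ ~ N(0, σᵢᵢ)`,
`(α₁²σ₁₁/X₁² + ⋯ + α_k²σ_kk/X_k²)⁻¹` is distributed as `Z²/(α₁ + ⋯ + α_k)²`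
for a standard normal `Z`. -/
theorem monomial_diagonal_chiSq
    {k : ℕ} (σ : Fin k → ℝ) (hσ : ∀ i, 0 < σ i)
    (α : Fin k → ℝ) (hα : ∀ i, 0 ≤ α i) (hα0 : α ≠ 0) :
    (Measure.pi fun i => gaussianReal 0 (σ i).toNNReal).map
        (fun x => (∑ i, α i ^ 2 * σ i / (x i) ^ 2)⁻¹) =
      (gaussianReal 0 1).map (fun z => z ^ 2 / (∑ i, α i) ^ 2) :=
  monomial_diagonal_chiSq_general σ hσ α hα
end
end

section
/- Let f(x) = xᵀAx be a quadratic form given by a nonzero symmetric k×k matrix A, and let Σ be a positive definite k×k matrix. If λ₁,…,λ_k are the eigenvalues of AΣ, then W_{f,Σ} has the same distribution as (λ₁Z₁² + ··· + λ_kZ_k²)² / (4(λ₁²Z₁² + ··· + λ_k²Z_k²)), where Z₁,…,Z_k are independent standard normal random variables. -/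
open MeasureTheory ProbabilityTheory Matrix MvPolynomial Real

noncomputable section

/-- The quadratic form `x ↦ xᵀ A x` as a polynomial. -/
def quadFormPoly {ι : Type*} [Fintype ι] (A : Matrix ι ι ℝ) : MvPolynomial ι ℝ :=
  ∑ i, ∑ j, C (A i j) * X i * X j


/-!
Write `X = B Z` with `B Bᵀ = Σ` and `Z` standard normal. Since `∇(xᵀAx) = 2Ax`, the Wald ratio
becomes `W(BZ) = (Zᵀ M Z)² / (4 ‖M Z‖²)` with `M = Bᵀ A B`, a symmetric matrix whose
characteristic polynomial is that of `A B Bᵀ = A Σ`. Expand `Z` in an orthonormal eigenbasis of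
`M` ordered so that the `i`-th eigenvalue is `λᵢ`: the coordinates are again independent standard
normals, and in them the ratio is the canonical one.
-/

theorem exists_perm_comp_eq_of_map_univ_eq {ι α : Type*} [Fintype ι] {f g : ι → α}
    (h : Finset.univ.val.map f = Finset.univ.val.map g) : ∃ σ : Equiv.Perm ι, g ∘ σ = f := by
  classical
  have card_fiber (φ : ι → α) (a : α) :
      Fintype.card {i // φ i = a} = (Finset.univ.val.map φ).count a := by
    rw [Multiset.count_map, Fintype.card_subtype]
    simp only [eq_comm (a := a)]
    rfl
  have hcard (a : α) : Fintype.card {i // f i = a} = Fintype.card {i // g i = a} := by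
    rw [card_fiber, card_fiber, h]
  exact ⟨Equiv.ofFiberEquiv fun a => Fintype.equivOfCardEq (hcard a),
    funext (Equiv.ofFiberEquiv_map _)⟩

section

variable {ι : Type*} [Fintype ι]

theorem Matrix.IsHermitian.exists_orthonormalBasis_mulVec_eq [DecidableEq ι]
    {M : Matrix ι ι ℝ} (hM : M.IsHermitian) {d : ι → ℝ}
    (h : M.charpoly = ∏ i, (Polynomial.X - Polynomial.C (d i))) :
    ∃ b : OrthonormalBasis ι ℝ (EuclideanSpace ℝ ι), ∀ j, M *ᵥ ⇑(b j) = d j • ⇑(b j) := by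
  rw [hM.charpoly_eq] at h
  obtain ⟨σ, hσ⟩ := exists_perm_comp_eq_of_map_univ_eq (by
    simpa [Polynomial.roots_prod, Polynomial.X_sub_C_ne_zero, Finset.prod_ne_zero_iff] using
      congrArg Polynomial.roots h)
  refine ⟨hM.eigenvectorBasis.reindex σ, fun j => ?_⟩
  simp [hM.mulVec_eigenvectorBasis, ← congrFun hσ (σ.symm j)]

theorem OrthonormalBasis.dotProduct_sum_smul (b : OrthonormalBasis ι ℝ (EuclideanSpace ℝ ι))
    (u v : ι → ℝ) : ⇑(∑ i, u i • b i) ⬝ᵥ ⇑(∑ i, v i • b i) = ∑ i, u i * v i := by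
  simpa [EuclideanSpace.inner_eq_star_dotProduct, dotProduct_comm] using
    b.orthonormal.inner_sum u v Finset.univ

theorem OrthonormalBasis.mulVec_sum_smul (b : OrthonormalBasis ι ℝ (EuclideanSpace ℝ ι))
    {M : Matrix ι ι ℝ} {d : ι → ℝ} (hb : ∀ j, M *ᵥ ⇑(b j) = d j • ⇑(b j)) (y : ι → ℝ) :
    M *ᵥ ⇑(∑ j, y j • b j) = ⇑(∑ j, (d j * y j) • b j) := by
  simp [Matrix.mulVec_sum, Matrix.mulVec_smul, hb, smul_smul, mul_comm]

theorem stdGaussian_map_sum_smul (b : OrthonormalBasis ι ℝ (EuclideanSpace ℝ ι)) :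
    (stdGaussian ι).map (fun y => ⇑(∑ j, y j • b j)) = stdGaussian ι := by
  calc (stdGaussian ι).map (fun y => ⇑(∑ j, y j • b j))
      = ((stdGaussian ι).map fun y => ∑ j, y j • b j).map WithLp.ofLp := by
        rw [Measure.map_map (by fun_prop) (by fun_prop)]; rfl
    _ = ((stdGaussian ι).map (WithLp.toLp 2)).map WithLp.ofLp := by
        rw [_root_.stdGaussian, ← ProbabilityTheory.stdGaussian_eq_map_pi_orthonormalBasis,
          ProbabilityTheory.map_pi_eq_stdGaussian]
    _ = stdGaussian ι := by
        rw [Measure.map_map (by fun_prop) (by fun_prop)]; exact Measure.map_id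

theorem measurable_waldRV (f : MvPolynomial ι ℝ) (S : Matrix ι ι ℝ) :
    Measurable (waldRV f S) := by
  have hgrad : Continuous (polyGrad f) :=
    continuous_pi fun i => MvPolynomial.continuous_eval (pderiv i f)
  have hden : Continuous fun x => polyGrad f x ⬝ᵥ S *ᵥ polyGrad f x :=
    hgrad.dotProduct (continuous_const.matrix_mulVec hgrad)
  exact ((MvPolynomial.continuous_eval f).pow 2).measurable.div hden.measurable

theorem eval_quadFormPoly (A : Matrix ι ι ℝ) (x : ι → ℝ) :
    eval x (quadFormPoly A) = x ⬝ᵥ A *ᵥ x := by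
  simp only [quadFormPoly, dotProduct, Matrix.mulVec, Finset.mul_sum, map_sum, eval_mul, eval_C,
    eval_X]
  exact Finset.sum_congr rfl fun i _ => Finset.sum_congr rfl fun j _ => by ring

theorem polyGrad_quadFormPoly (A : Matrix ι ι ℝ) (x : ι → ℝ) :
    polyGrad (quadFormPoly A) x = (A + Aᵀ) *ᵥ x := by
  classical
  ext l
  simp [polyGrad, quadFormPoly, Pi.single_apply, Matrix.mulVec, dotProduct, mul_ite,
    Finset.sum_add_distrib, add_mul, Finset.sum_ite_eq']
  simp only [mul_comm (x _)]
  ring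

theorem waldRV_quadFormPoly {A : Matrix ι ι ℝ} (hA : A.IsSymm) (S : Matrix ι ι ℝ) (x : ι → ℝ) :
    waldRV (quadFormPoly A) S x = (x ⬝ᵥ A *ᵥ x) ^ 2 / (4 * (A *ᵥ x ⬝ᵥ S *ᵥ A *ᵥ x)) := by
  rw [waldRV, eval_quadFormPoly, polyGrad_quadFormPoly, hA.eq, Matrix.add_mulVec,
    Matrix.mulVec_add, add_dotProduct, dotProduct_add]
  ring

/-- `waldRV (quadFormPoly M) 1` for symmetric `M`. -/
def quadRatio (M : Matrix ι ι ℝ) (z : ι → ℝ) : ℝ :=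
  (z ⬝ᵥ M *ᵥ z) ^ 2 / (4 * (M *ᵥ z ⬝ᵥ M *ᵥ z))

theorem measurable_quadRatio (M : Matrix ι ι ℝ) : Measurable (quadRatio M) := by
  have hM : Continuous (M *ᵥ ·) := continuous_const.matrix_mulVec continuous_id
  exact ((continuous_id.dotProduct hM).pow 2).measurable.div
    ((hM.dotProduct hM).measurable.const_mul 4)

theorem waldRV_quadFormPoly_mulVec {A : Matrix ι ι ℝ} (hA : A.IsSymm) (B : Matrix ι ι ℝ)
    (z : ι → ℝ) : waldRV (quadFormPoly A) (B * Bᵀ) (B *ᵥ z) = quadRatio (Bᵀ * A * B) z := by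
  have transpose_dot (C : Matrix ι ι ℝ) (v w : ι → ℝ) : v ⬝ᵥ C *ᵥ w = Cᵀ *ᵥ v ⬝ᵥ w := by
    rw [Matrix.dotProduct_mulVec, Matrix.mulVec_transpose]
  have hnum : B *ᵥ z ⬝ᵥ A *ᵥ B *ᵥ z = z ⬝ᵥ (Bᵀ * A * B) *ᵥ z := by
    rw [dotProduct_comm, transpose_dot, dotProduct_comm, Matrix.mulVec_mulVec,
      Matrix.mulVec_mulVec]
  have hden : A *ᵥ B *ᵥ z ⬝ᵥ (B * Bᵀ) *ᵥ A *ᵥ B *ᵥ z =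
      (Bᵀ * A * B) *ᵥ z ⬝ᵥ (Bᵀ * A * B) *ᵥ z := by
    rw [← Matrix.mulVec_mulVec, transpose_dot, ← Matrix.mulVec_mulVec, ← Matrix.mulVec_mulVec]
  rw [waldRV_quadFormPoly hA, quadRatio, hnum, hden]

theorem quadRatio_sum_smul (b : OrthonormalBasis ι ℝ (EuclideanSpace ℝ ι)) {M : Matrix ι ι ℝ}
    {d : ι → ℝ} (hb : ∀ j, M *ᵥ ⇑(b j) = d j • ⇑(b j)) (y : ι → ℝ) :
    quadRatio M ⇑(∑ j, y j • b j) =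
      (∑ i, d i * y i ^ 2) ^ 2 / (4 * ∑ i, d i ^ 2 * y i ^ 2) := by
  rw [quadRatio, b.mulVec_sum_smul hb, b.dotProduct_sum_smul, b.dotProduct_sum_smul]
  congr 3 <;> ext i <;> ring

theorem stdGaussian_map_quadRatio (b : OrthonormalBasis ι ℝ (EuclideanSpace ℝ ι))
    {M : Matrix ι ι ℝ} {d : ι → ℝ} (hb : ∀ j, M *ᵥ ⇑(b j) = d j • ⇑(b j)) :
    (stdGaussian ι).map (quadRatio M) =
      (stdGaussian ι).map fun y => (∑ i, d i * y i ^ 2) ^ 2 / (4 * ∑ i, d i ^ 2 * y i ^ 2) := by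
  conv_lhs => rw [← stdGaussian_map_sum_smul b]
  rw [Measure.map_map (measurable_quadRatio M) (by fun_prop)]
  congr 1
  exact funext (quadRatio_sum_smul b hb)

end

theorem waldRV_quadratic_canonical_general {k : ℕ}
    (A : Matrix (Fin k) (Fin k) ℝ) (hA : A.IsSymm)
    (S : Matrix (Fin k) (Fin k) ℝ)
    (μ : Measure (Fin k → ℝ)) (hμ : IsCenteredGaussian μ S)
    (lam : Fin k → ℝ)
    (hlam : (A * S).charpoly = ∏ i, (Polynomial.X - Polynomial.C (lam i))) :
    μ.map (waldRV (quadFormPoly A) S) =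
      (stdGaussian (Fin k)).map
        (fun z => (∑ i, lam i * z i ^ 2) ^ 2 / (4 * ∑ i, lam i ^ 2 * z i ^ 2)) := by
  obtain ⟨B, rfl, rfl⟩ := hμ
  have hM : (Bᵀ * A * B).IsHermitian := by
    simpa [Matrix.conjTranspose_eq_transpose_of_trivial] using
      Matrix.isHermitian_conjTranspose_mul_mul B (Matrix.isHermitian_iff_isSymm.mpr hA)
  have hcharpoly : (Bᵀ * A * B).charpoly = ∏ i, (Polynomial.X - Polynomial.C (lam i)) := by
    rw [mul_assoc, Matrix.charpoly_mul_comm, mul_assoc, hlam]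
  obtain ⟨b, hb⟩ := hM.exists_orthonormalBasis_mulVec_eq hcharpoly
  rw [Measure.map_map (measurable_waldRV _ _) (Continuous.measurable (by fun_prop)),
    ← stdGaussian_map_quadRatio b hb]
  congr 1
  exact funext (waldRV_quadFormPoly_mulVec hA B)

/-- Let `f(x) = xᵀAx` be a quadratic form given by a nonzero symmetric matrix
`A` and let `Σ` be positive definite.  If `λ₁, …, λ_k` are the eigenvalues of `AΣ` (i.e.,
the characteristic polynomial of `AΣ` is `∏ᵢ (X - λᵢ)`), then `W_{f,Σ}` has the same
distribution as `(∑ᵢ λᵢ Zᵢ²)² / (4 ∑ᵢ λᵢ² Zᵢ²)` for independent standard normals `Zᵢ`. -/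
theorem waldRV_quadratic_canonical {k : ℕ}
    (A : Matrix (Fin k) (Fin k) ℝ) (hA : A.IsSymm) (hA0 : A ≠ 0)
    (S : Matrix (Fin k) (Fin k) ℝ) (hS : S.PosDef)
    (μ : Measure (Fin k → ℝ)) (hμ : IsCenteredGaussian μ S)
    (lam : Fin k → ℝ)
    (hlam : (A * S).charpoly = ∏ i, (Polynomial.X - Polynomial.C (lam i))) :
    μ.map (waldRV (quadFormPoly A) S) =
      (stdGaussian (Fin k)).map
        (fun z => (∑ i, lam i * z i ^ 2) ^ 2 / (4 * ∑ i, lam i ^ 2 * z i ^ 2)) :=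
  waldRV_quadratic_canonical_general A hA S μ hμ lam hlam
end
end

section
/- If c ≥ 0 and Ψ is uniformly distributed on [0, 2π], then the random variable S_c(Ψ) := (1+c)²·cos(Ψ)²·sin(Ψ)² / (cos(Ψ)² + c²·sin(Ψ)²) has the same distribution as cos(Ψ)². -/
/-!
Put `y = cos 2ψ`. Then `S_c(ψ)` is a rational function of `y`, and `y` has the same law for `ψ`
uniform on `[0, 2π]` as `cos θ` for `θ` uniform on `[0, π]`: fold `[0, 4π]` twice by the
reflections `θ ↦ 4π - θ` and `θ ↦ 2π - θ`. Write the level as `x = cos² α` and choose `β` with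
`(1 + c) cos β = (c - 1) cos α`. The sign of `S_c - x` is then that of
`(y - cos (β + α)) (y - cos (β - α))`, so on `[0, π]` the set `{S_c ≤ x}` is
`[0, β - α] ∪ [β + α, π]`. It has length `π - 2α`, the same as `{cos² (θ / 2) ≤ x} = [2α, π]`.
-/

open MeasureTheory ProbabilityTheory Matrix MvPolynomial Real

noncomputable section

open Set

theorem volume_Icc_inter_eq_two_mul_of_reflect {a b m : ℝ} {E : Set ℝ} (hab : a ≤ b)
    (hm : a + b = 2 * m) (hE : MeasurableSet E) (hrefl : ∀ x, a + b - x ∈ E ↔ x ∈ E) :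
    volume (Icc a b ∩ E) = 2 * volume (Icc a m ∩ E) := by
  have hsplit : Icc a b ∩ E = (Icc a m ∩ E) ∪ (Icc m b ∩ E) := by
    rw [← union_inter_distrib_right, Icc_union_Icc_eq_Icc (by linarith) (by linarith)]
  have hnull : AEDisjoint volume (Icc a m ∩ E) (Icc m b ∩ E) :=
    measure_mono_null (fun x hx => show x ∈ ({m} : Set ℝ) from
      le_antisymm hx.1.1.2 hx.2.1.1) (measure_singleton m)
  have hupper : Icc m b ∩ E = (fun x => a + b - x) ⁻¹' (Icc a m ∩ E) := by
    ext x
    simp only [mem_inter_iff, mem_Icc, mem_preimage, hrefl]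
    constructor <;> rintro ⟨⟨h1, h2⟩, h3⟩ <;> exact ⟨⟨by linarith, by linarith⟩, h3⟩
  have hmeas : MeasurableSet (Icc a m ∩ E) := measurableSet_Icc.inter hE
  rw [hsplit, measure_union₀ (measurableSet_Icc.inter hE).nullMeasurableSet hnull, hupper,
    (Measure.measurePreserving_sub_left volume (a + b)).measure_preimage hmeas.nullMeasurableSet,
    two_mul]

theorem volume_Icc_inter_cos_two_mul_preimage {s : Set ℝ} (hs : MeasurableSet s) :
    volume (Icc 0 (2 * π) ∩ (fun ψ => cos (2 * ψ)) ⁻¹' s) = 2 * volume (Icc 0 π ∩ cos ⁻¹' s) := by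
  have hE : MeasurableSet (cos ⁻¹' s) := continuous_cos.measurable hs
  have hscale : Icc 0 (2 * π) ∩ (fun ψ => cos (2 * ψ)) ⁻¹' s =
      (2 * ·) ⁻¹' (Icc 0 (2 * (2 * π)) ∩ cos ⁻¹' s) := by
    ext ψ
    simp only [mem_inter_iff, mem_Icc, mem_preimage]
    constructor <;> rintro ⟨⟨h1, h2⟩, h3⟩ <;> exact ⟨⟨by linarith, by linarith⟩, h3⟩
  have hfold₁ := volume_Icc_inter_eq_two_mul_of_reflect (a := 0) (b := 2 * (2 * π)) (m := 2 * π)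
    (by positivity) (by ring) hE fun x => by
      rw [mem_preimage, mem_preimage, zero_add, ← cos_nat_mul_two_pi_sub x 2, Nat.cast_two]
  have hfold₂ := volume_Icc_inter_eq_two_mul_of_reflect (a := 0) (b := 2 * π) (m := π)
    (by positivity) (by ring) hE fun x => by
      rw [mem_preimage, mem_preimage, zero_add, cos_two_pi_sub]
  rw [hscale, volume_preimage_mul_left two_ne_zero, hfold₁, hfold₂, abs_of_pos (by norm_num),
    ENNReal.ofReal_inv_of_pos two_pos, ENNReal.ofReal_ofNat, ← mul_assoc,
    ENNReal.inv_mul_cancel two_ne_zero ENNReal.ofNat_ne_top, one_mul]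

theorem map_cos_two_mul_cond_Icc :
    (volume[|Icc 0 (2 * π)]).map (fun ψ => cos (2 * ψ)) = (volume[|Icc 0 π]).map cos := by
  ext s hs
  rw [Measure.map_apply (by fun_prop) hs, Measure.map_apply continuous_cos.measurable hs,
    cond_apply measurableSet_Icc, cond_apply measurableSet_Icc,
    volume_Icc_inter_cos_two_mul_preimage hs, Real.volume_Icc, Real.volume_Icc, sub_zero, sub_zero,
    ENNReal.ofReal_mul zero_le_two, ENNReal.ofReal_ofNat, ENNReal.mul_inv (by simp) (by simp),
    mul_mul_mul_comm, ENNReal.inv_mul_cancel two_ne_zero ENNReal.ofNat_ne_top, one_mul]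

def trigRatioCos (c y : ℝ) : ℝ :=
  (1 + c) ^ 2 * (1 - y ^ 2) / (2 * ((1 + y) + c ^ 2 * (1 - y)))

theorem trigRatio_eq_trigRatioCos (c ψ : ℝ) :
    (1 + c) ^ 2 * cos ψ ^ 2 * sin ψ ^ 2 / (cos ψ ^ 2 + c ^ 2 * sin ψ ^ 2) =
      trigRatioCos c (cos (2 * ψ)) := by
  have hnum : (1 + c) ^ 2 * cos ψ ^ 2 * sin ψ ^ 2 = (1 + c) ^ 2 * (1 - cos (2 * ψ) ^ 2) / 4 := by
    rw [cos_two_mul, sin_sq]; ring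
  have hden : cos ψ ^ 2 + c ^ 2 * sin ψ ^ 2 =
      2 * ((1 + cos (2 * ψ)) + c ^ 2 * (1 - cos (2 * ψ))) / 4 := by
    rw [cos_two_mul, sin_sq]; ring
  rw [hnum, hden, div_div_div_cancel_right₀ four_ne_zero, trigRatioCos]

theorem cos_sq_mul_sub_eq {c α β : ℝ} (hαβ : (1 + c) * cos β = (c - 1) * cos α) (y : ℝ) :
    cos α ^ 2 * (2 * ((1 + y) + c ^ 2 * (1 - y))) - (1 + c) ^ 2 * (1 - y ^ 2) =
      (1 + c) ^ 2 * ((y - cos (β + α)) * (y - cos (β - α))) := by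
  rw [cos_add, cos_sub]
  linear_combination (2 * y * (1 + c) * cos α - ((1 + c) * cos β + (c - 1) * cos α)) * hαβ
    + (1 + c) ^ 2 * (1 - cos β ^ 2) * sin_sq_add_cos_sq α
    + (1 + c) ^ 2 * sin α ^ 2 * sin_sq_add_cos_sq β

theorem trigRatioCos_le_cos_sq_iff {c α β y : ℝ} (hc : 1 + c ≠ 0)
    (hαβ : (1 + c) * cos β = (c - 1) * cos α) (hy : y ∈ Icc (-1) 1) :
    trigRatioCos c y ≤ cos α ^ 2 ↔ 0 ≤ (y - cos (β + α)) * (y - cos (β - α)) := by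
  obtain ⟨hy₁, hy₂⟩ := hy
  rcases hy₁.eq_or_lt with rfl | hy₁
  · have hprod : 0 ≤ (-1 - cos (β + α)) * (-1 - cos (β - α)) :=
      mul_nonneg_of_nonpos_of_nonpos (by linarith [neg_one_le_cos (β + α)])
        (by linarith [neg_one_le_cos (β - α)])
    simp [trigRatioCos, hprod, sq_nonneg]
  have hden : 0 < 2 * ((1 + y) + c ^ 2 * (1 - y)) := by nlinarith [sq_nonneg c]
  rw [trigRatioCos, div_le_iff₀ hden, ← sub_nonneg, cos_sq_mul_sub_eq hαβ,
    mul_nonneg_iff_of_pos_left (by positivity)]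

theorem trigRatioCos_cos_le_cos_sq_iff {c α β θ : ℝ} (hc : 1 + c ≠ 0)
    (hαβ : (1 + c) * cos β = (c - 1) * cos α) (hα : 0 ≤ α) (hβα : α ≤ β) (hβπ : β + α ≤ π)
    (hθ : θ ∈ Icc 0 π) :
    trigRatioCos c (cos θ) ≤ cos α ^ 2 ↔ θ ≤ β - α ∨ β + α ≤ θ := by
  have hmem₁ : β - α ∈ Icc 0 π := ⟨by linarith, by linarith⟩
  have hmem₂ : β + α ∈ Icc 0 π := ⟨by linarith, hβπ⟩
  rw [trigRatioCos_le_cos_sq_iff hc hαβ ⟨neg_one_le_cos θ, cos_le_one θ⟩,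
    sub_mul_sub_nonneg_iff _ (strictAntiOn_cos.antitoneOn hmem₁ hmem₂ (by linarith)),
    strictAntiOn_cos.le_iff_ge hθ hmem₂, strictAntiOn_cos.le_iff_ge hmem₁ hθ, or_comm]

theorem one_add_cos_div_two_le_cos_sq_iff {α θ : ℝ} (hα : 2 * α ∈ Icc 0 π) (hθ : θ ∈ Icc 0 π) :
    (1 + cos θ) / 2 ≤ cos α ^ 2 ↔ 2 * α ≤ θ := by
  rw [← strictAntiOn_cos.le_iff_ge hθ hα, cos_two_mul]
  constructor <;> intro h <;> linarith

theorem exists_angles_of_mem_Ico {c x : ℝ} (hc : 0 ≤ c) (hx : x ∈ Ico 0 1) :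
    ∃ α β, cos α ^ 2 = x ∧ 0 < α ∧ α ≤ β ∧ β + α ≤ π ∧ (1 + c) * cos β = (c - 1) * cos α := by
  set s := √x with hs
  set t := (c - 1) / (c + 1) * s with ht_def
  have hs₀ : 0 ≤ s := sqrt_nonneg x
  have hs₁ : s < 1 := (sqrt_lt' one_pos).2 (by rw [one_pow]; exact hx.2)
  have ht : -s ≤ t ∧ t ≤ s := by
    have hr : -1 ≤ (c - 1) / (c + 1) ∧ (c - 1) / (c + 1) ≤ 1 := by
      constructor
      · rw [le_div_iff₀ (by linarith)]; linarith
      · rw [div_le_one (by linarith)]; linarith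
    constructor <;> nlinarith
  refine ⟨arccos s, arccos t, ?_, arccos_pos.2 hs₁, arccos_le_arccos ht.2, ?_, ?_⟩
  · rw [cos_arccos (by linarith) hs₁.le, hs, sq_sqrt hx.1]
  · have := arccos_le_arccos ht.1
    rw [arccos_neg] at this
    linarith
  · rw [cos_arccos (by linarith) (by linarith), cos_arccos (by linarith) hs₁.le, ht_def]
    field_simp
    ring

theorem trigRatioCos_mem_Icc (c : ℝ) {y : ℝ} (hy : y ∈ Icc (-1) 1) :
    trigRatioCos c y ∈ Icc 0 1 := by
  obtain ⟨hy₁, hy₂⟩ := hy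
  rcases hy₁.eq_or_lt with rfl | hy₁
  · simp [trigRatioCos]
  have hden : 0 < 2 * ((1 + y) + c ^ 2 * (1 - y)) := by nlinarith [sq_nonneg c]
  refine ⟨div_nonneg (mul_nonneg (sq_nonneg _) (by nlinarith)) hden.le, ?_⟩
  rw [trigRatioCos, div_le_one hden]
  nlinarith [sq_nonneg ((1 + c) * y + (1 - c))]

theorem Icc_inter_trigRatioCos_cos_le_cos_sq {c α β : ℝ} (hc : 1 + c ≠ 0)
    (hαβ : (1 + c) * cos β = (c - 1) * cos α) (hα : 0 ≤ α) (hβα : α ≤ β) (hβπ : β + α ≤ π) :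
    Icc 0 π ∩ {θ | trigRatioCos c (cos θ) ≤ cos α ^ 2} = Icc 0 (β - α) ∪ Icc (β + α) π := by
  have hiff θ (hθ : θ ∈ Icc 0 π) := trigRatioCos_cos_le_cos_sq_iff hc hαβ hα hβα hβπ hθ
  ext θ
  simp only [mem_inter_iff, mem_ofPred_eq, mem_union, mem_Icc] at hiff ⊢
  grind

theorem Icc_inter_one_add_cos_div_two_le_cos_sq {α : ℝ} (hα : 2 * α ∈ Icc 0 π) :
    Icc 0 π ∩ {θ | (1 + cos θ) / 2 ≤ cos α ^ 2} = Icc (2 * α) π := by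
  have hiff θ (hθ : θ ∈ Icc 0 π) := one_add_cos_div_two_le_cos_sq_iff hα hθ
  ext θ
  simp only [mem_inter_iff, mem_ofPred_eq, mem_Icc] at hiff hα ⊢
  grind

theorem volume_Icc_inter_trigRatioCos_cos_le {c : ℝ} (hc : 0 ≤ c) (x : ℝ) :
    volume (Icc 0 π ∩ {θ | trigRatioCos c (cos θ) ≤ x}) =
      volume (Icc 0 π ∩ {θ | (1 + cos θ) / 2 ≤ x}) := by
  have hcos θ : cos θ ∈ Icc (-1) 1 := ⟨neg_one_le_cos θ, cos_le_one θ⟩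
  rcases lt_or_ge x 0 with hx | hx₀
  · have hS θ : ¬ trigRatioCos c (cos θ) ≤ x := fun h =>
      (trigRatioCos_mem_Icc c (hcos θ)).1.not_gt (h.trans_lt hx)
    have hC θ : ¬ (1 + cos θ) / 2 ≤ x := fun h => by linarith [neg_one_le_cos θ]
    simp [hS, hC]
  rcases lt_or_ge x 1 with hx₁ | hx₁
  · obtain ⟨α, β, rfl, hα, hβα, hβπ, hαβ⟩ := exists_angles_of_mem_Ico hc ⟨hx₀, hx₁⟩
    have hdisj : Disjoint (Icc 0 (β - α)) (Icc (β + α) π) :=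
      disjoint_left.2 fun θ h₁ h₂ => by linarith [h₁.2, h₂.1]
    rw [Icc_inter_trigRatioCos_cos_le_cos_sq (by linarith) hαβ hα.le hβα hβπ,
      Icc_inter_one_add_cos_div_two_le_cos_sq ⟨by linarith, by linarith⟩,
      measure_union hdisj measurableSet_Icc, Real.volume_Icc, Real.volume_Icc, Real.volume_Icc,
      ← ENNReal.ofReal_add (by linarith) (by linarith)]
    congr 1
    ring
  · have hS θ : trigRatioCos c (cos θ) ≤ x := (trigRatioCos_mem_Icc c (hcos θ)).2.trans hx₁
    have hC θ : (1 + cos θ) / 2 ≤ x := by linarith [cos_le_one θ]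
    simp [hS, hC]

theorem measurable_trigRatioCos (c : ℝ) : Measurable (trigRatioCos c) := by
  unfold trigRatioCos
  fun_prop

theorem map_cos_map_trigRatioCos {c : ℝ} (hc : 0 ≤ c) :
    ((volume[|Icc 0 π]).map cos).map (trigRatioCos c) =
      ((volume[|Icc 0 π]).map cos).map (fun y => (1 + y) / 2) := by
  have hcos := continuous_cos.measurable
  rw [Measure.map_map (measurable_trigRatioCos c) hcos, Measure.map_map (by fun_prop) hcos]
  refine Measure.ext_of_Iic _ _ fun x => ?_
  rw [Measure.map_apply ((measurable_trigRatioCos c).comp hcos) measurableSet_Iic,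
    Measure.map_apply (by fun_prop) measurableSet_Iic, cond_apply measurableSet_Icc,
    cond_apply measurableSet_Icc]
  exact congrArg _ (volume_Icc_inter_trigRatioCos_cos_le hc x)

open scoped ProbabilityTheory in
/-- If `c ≥ 0` and `Ψ` is uniformly distributed on `[0, 2π]`, then
`S_c(Ψ) = (1+c)² cos(Ψ)² sin(Ψ)² / (cos(Ψ)² + c² sin(Ψ)²)` has the same distribution as
`cos(Ψ)²`.  Here the uniform distribution on `[0, 2π]` is the normalized restriction of
Lebesgue measure. -/
theorem trig_ratio_distribution (c : ℝ) (hc : 0 ≤ c) :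
    (volume[|Set.Icc (0 : ℝ) (2 * Real.pi)]).map
        (fun ψ => (1 + c) ^ 2 * Real.cos ψ ^ 2 * Real.sin ψ ^ 2 /
          (Real.cos ψ ^ 2 + c ^ 2 * Real.sin ψ ^ 2)) =
      (volume[|Set.Icc (0 : ℝ) (2 * Real.pi)]).map (fun ψ => Real.cos ψ ^ 2) := by
  have hdouble : Measurable fun ψ : ℝ => cos (2 * ψ) := by fun_prop
  have hS : (fun ψ => (1 + c) ^ 2 * Real.cos ψ ^ 2 * Real.sin ψ ^ 2 /
      (Real.cos ψ ^ 2 + c ^ 2 * Real.sin ψ ^ 2)) = trigRatioCos c ∘ fun ψ => cos (2 * ψ) :=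
    funext (trigRatio_eq_trigRatioCos c)
  have hcos_sq : (fun ψ => Real.cos ψ ^ 2) = (fun y => (1 + y) / 2) ∘ fun ψ => cos (2 * ψ) :=
    funext fun ψ => by simp only [Function.comp_apply, cos_sq]; ring
  rw [hS, hcos_sq, ← Measure.map_map (measurable_trigRatioCos c) hdouble,
    ← Measure.map_map (by fun_prop) hdouble, map_cos_two_mul_cond_Icc]
  exact map_cos_map_trigRatioCos hc
end
end

section
/- If f ∈ ℝ[x₁,…,x_k] is a nonzero quadratic form and Σ is any nonzero positive semidefinite k×k matrix with positive diagonal entries, then W_{f,Σ} is stochastically dominated by (1/4)·χ²_k, i.e., W_{f,Σ} ≤_st (1/4)·χ²_k. Moreover, equality in distribution is achieved when f(x) = x₁² + ··· + x_k² and Σ is the identity matrix. -/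
/-!
By Euler's identity a quadratic form satisfies `2 f(x) = ⟨x, ∇f(x)⟩`. Writing the Gaussian vector
as `x = A z` with `A Aᵀ = Σ` and `z` standard normal, this reads `2 f(x) = ⟨z, Aᵀ ∇f(x)⟩`, while the
denominator of `W` is `|Aᵀ ∇f(x)|²`. Cauchy–Schwarz therefore gives `4 W ≤ |z|²` pointwise, which
is the stochastic domination by `χ²_k / 4`. For `f = |x|²` and `Σ = I` the bound is an equality.
-/

open MeasureTheory ProbabilityTheory Matrix MvPolynomial Real

noncomputable section

section

variable {ι : Type*} [Fintype ι]

theorem continuous_polyGrad (f : MvPolynomial ι ℝ) :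
    Continuous (polyGrad f) :=
  continuous_pi fun _ => continuous_eval _

namespace MvPolynomial.IsHomogeneous

variable {n : ℕ} {f : MvPolynomial ι ℝ}

theorem dotProduct_polyGrad (hf : f.IsHomogeneous n) (x : ι → ℝ) :
    x ⬝ᵥ polyGrad f x = n * eval x f := by
  simpa [dotProduct, polyGrad] using congrArg (eval x) hf.sum_X_mul_pderiv

theorem sq_mul_waldRV_le (hf : f.IsHomogeneous n) (A : Matrix ι ι ℝ) (z : ι → ℝ) :
    (n : ℝ) ^ 2 * waldRV f (A * Aᵀ) (A *ᵥ z) ≤ ∑ i, z i ^ 2 := by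
  set v := Aᵀ *ᵥ polyGrad f (A *ᵥ z)
  have hnum : n * eval (A *ᵥ z) f = ∑ i, z i * v i := by
    rw [← hf.dotProduct_polyGrad, dotProduct_comm, ← dotProduct_transpose_mulVec]
    rfl
  have hden : polyGrad f (A *ᵥ z) ⬝ᵥ (A * Aᵀ) *ᵥ polyGrad f (A *ᵥ z) = ∑ i, v i ^ 2 := by
    rw [← mulVec_mulVec, ← dotProduct_transpose_mulVec]
    simp only [dotProduct, sq, v]
  rw [waldRV, hden, ← mul_div_assoc, ← mul_pow, hnum]
  exact div_le_of_le_mul₀ (by positivity) (by positivity) (Finset.sum_mul_sq_le_sq_mul_sq _ _ _)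

end MvPolynomial.IsHomogeneous

theorem polyGrad_sum_X_sq [DecidableEq ι] (z : ι → ℝ) :
    polyGrad (∑ i, X i ^ 2) z = 2 • z := by
  ext i
  simp [polyGrad, Pi.single_apply]

theorem waldRV_sum_X_sq_one [DecidableEq ι] :
    waldRV (∑ i, X i ^ 2) 1 = fun z : ι → ℝ => 1 / 4 * ∑ i, z i ^ 2 := by
  ext z
  have hden : 2 • z ⬝ᵥ 2 • z = 4 * ∑ i, z i ^ 2 := by
    simp only [dotProduct, Pi.smul_apply, Finset.mul_sum]
    exact Finset.sum_congr rfl fun i _ => by ring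
  rw [waldRV, polyGrad_sum_X_sq, one_mulVec, hden]
  simp only [eval_sum, eval_pow, eval_X]
  rw [sq, mul_comm 4, ← div_div, mul_self_div_self]
  ring

end

theorem map_chiSq_const_mul (k : ℕ) (c : ℝ) :
    (chiSq k).map (fun y => c * y) = (stdGaussian (Fin k)).map fun z => c * ∑ i, z i ^ 2 := by
  rw [chiSq, Measure.map_map (by fun_prop) (by fun_prop)]
  rfl

theorem map_Ioi_le_map_Ioi_of_le {Ω : Type*} [MeasurableSpace Ω] (ν : Measure Ω) {U V : Ω → ℝ}
    (hU : Measurable U) (hV : Measurable V) (hUV : ∀ ω, U ω ≤ V ω) (t : ℝ) :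
    ν.map U (Set.Ioi t) ≤ ν.map V (Set.Ioi t) := by
  rw [Measure.map_apply hU measurableSet_Ioi, Measure.map_apply hV measurableSet_Ioi]
  exact measure_mono fun ω (hω : t < U ω) => hω.trans_le (hUV ω)

theorem waldRV_quadratic_upper_bound_general {k : ℕ}
    (f : MvPolynomial (Fin k) ℝ) (hf : f.IsHomogeneous 2)
    (S : Matrix (Fin k) (Fin k) ℝ)
    (μ : Measure (Fin k → ℝ)) (hμ : IsCenteredGaussian μ S) :
    (∀ t : ℝ, μ.map (waldRV f S) (Set.Ioi t) ≤
        ((chiSq k).map (fun y => 1 / 4 * y)) (Set.Ioi t)) ∧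
      (stdGaussian (Fin k)).map
          (waldRV (∑ i : Fin k, X i ^ 2) (1 : Matrix (Fin k) (Fin k) ℝ)) =
        (chiSq k).map (fun y => 1 / 4 * y) := by
  obtain ⟨A, rfl, rfl⟩ := hμ
  rw [map_chiSq_const_mul]
  refine ⟨fun t => ?_, by rw [waldRV_sum_X_sq_one]⟩
  rw [Measure.map_map (measurable_waldRV f _) (by fun_prop)]
  refine map_Ioi_le_map_Ioi_of_le _ ((measurable_waldRV f _).comp (by fun_prop)) (by fun_prop)
    (fun z => ?_) t
  have hz := hf.sq_mul_waldRV_le A z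
  push_cast at hz
  rw [Function.comp_apply]
  linarith

/-- If `f` is a nonzero quadratic form in `k` variables and `Σ` is a nonzero
positive semidefinite matrix with positive diagonal entries, then
`W_{f,Σ} ≤_st (1/4)·χ²_k`; moreover, equality in distribution is achieved for
`f(x) = x₁² + ⋯ + x_k²` and `Σ = I`. -/
theorem waldRV_quadratic_upper_bound {k : ℕ}
    (f : MvPolynomial (Fin k) ℝ) (hf : f.IsHomogeneous 2) (hf0 : f ≠ 0)
    (S : Matrix (Fin k) (Fin k) ℝ) (hS : S.PosSemidef) (hS0 : S ≠ 0)
    (hSdiag : ∀ i, 0 < S i i)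
    (μ : Measure (Fin k → ℝ)) (hμ : IsCenteredGaussian μ S) :
    (∀ t : ℝ, μ.map (waldRV f S) (Set.Ioi t) ≤
        ((chiSq k).map (fun y => 1 / 4 * y)) (Set.Ioi t)) ∧
      (stdGaussian (Fin k)).map
          (waldRV (∑ i : Fin k, X i ^ 2) (1 : Matrix (Fin k) (Fin k) ℝ)) =
        (chiSq k).map (fun y => 1 / 4 * y) :=
  waldRV_quadratic_upper_bound_general f hf S μ hμ
end
end

section
/- Let X = (X₁, X₂)ᵀ be bivariate normal with mean zero, Var(X₁) = Var(X₂) = 1, and Cor(X₁,X₂) = ρ with |ρ| < 1. Then the random variable Q = 4·(1/X₁² − 2ρ/(X₁X₂) + 1/X₂²)^{-1} has expected value E[Q] = (1 + 2ρ²)/(1 − ρ²); in particular, the distribution of Q depends on ρ. -/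
/-!
Write `X = A Z` with `Z` standard normal on `ℝ²`. The rows `u`, `v` of `A` are unit vectors with
`⟪u, v⟫ = ρ`, and off the null lines `⟪u, Z⟫ = 0`, `⟪v, Z⟫ = 0` the identity
`X₂² - 2ρ X₁ X₂ + X₁² = (1 - ρ²) ‖Z‖²` gives
`Q = 4 X₁² X₂² / (X₂² - 2ρ X₁ X₂ + X₁²) = 4 / (1 - ρ²) · ⟪u, Z⟫² ⟪v, Z⟫² / ‖Z‖²`.
This is homogeneous of degree two, so in polar coordinates its expectation is `E ‖Z‖² = 2`
times the mean over the circle of `⟪u, e_θ⟫² ⟪v, e_θ⟫²`, which is `(1 + 2ρ²) / 8`.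
-/

open MeasureTheory ProbabilityTheory Matrix MvPolynomial Real

noncomputable section

open Set Filter

lemma integral_Ioi_pow_three_mul_exp_neg_sq_div_two :
    ∫ r in Ioi (0 : ℝ), r ^ 3 * exp (-r ^ 2 / 2) = 2 := by
  have h := integral_rpow_mul_exp_neg_mul_rpow (p := 2) (q := 3) (b := 1 / 2)
    (by norm_num) (by norm_num) (by norm_num)
  norm_num at h
  simpa [neg_div, div_eq_inv_mul] using h

lemma integral_gaussianReal_prod (f : ℝ × ℝ → ℝ) :
    ∫ p, f p ∂(gaussianReal 0 1).prod (gaussianReal 0 1) =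
      ∫ p, (2 * π)⁻¹ * exp (-(p.1 ^ 2 + p.2 ^ 2) / 2) * f p := by
  rw [gaussianReal_of_var_ne_zero 0 one_ne_zero,
    prod_withDensity (measurable_gaussianPDF 0 1) (measurable_gaussianPDF 0 1),
    ← Measure.volume_eq_prod, integral_withDensity_eq_integral_toReal_smul (by fun_prop)
      (.of_forall fun p => ENNReal.mul_lt_top (by simp [gaussianPDF]) (by simp [gaussianPDF]))]
  congr 1 with p
  rw [smul_eq_mul, ENNReal.toReal_mul, toReal_gaussianPDF, toReal_gaussianPDF,
    gaussianPDFReal_def]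
  have hsqrt : (√(2 * π))⁻¹ * (√(2 * π))⁻¹ = (2 * π)⁻¹ := by
    rw [← mul_inv, Real.mul_self_sqrt (by positivity)]
  simp only [sub_zero, NNReal.coe_one, mul_one]
  rw [mul_mul_mul_comm, hsqrt, ← exp_add]
  ring_nf

lemma ae_gaussianReal_prod_ne_zero {a b : ℝ} (hab : (a, b) ≠ 0) :
    ∀ᵐ p ∂(gaussianReal 0 1).prod (gaussianReal 0 1), a * p.1 + b * p.2 ≠ 0 := by
  have hac : (gaussianReal 0 1).prod (gaussianReal 0 1) ≪ volume := by
    rw [Measure.volume_eq_prod]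
    exact (gaussianReal_absolutelyContinuous 0 one_ne_zero).prod
      (gaussianReal_absolutelyContinuous 0 one_ne_zero)
  refine hac.ae_le (measure_eq_zero_iff_ae_notMem.mp ?_)
  let L : ℝ × ℝ →ₗ[ℝ] ℝ := a • LinearMap.fst ℝ ℝ ℝ + b • LinearMap.snd ℝ ℝ ℝ
  have hL : LinearMap.ker L ≠ ⊤ := by
    rw [Ne, LinearMap.ker_eq_top]
    intro h
    have ha := LinearMap.congr_fun h (1, 0)
    have hb := LinearMap.congr_fun h (0, 1)
    simp only [L, LinearMap.add_apply, LinearMap.smul_apply, LinearMap.fst_apply,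
      LinearMap.snd_apply, smul_eq_mul, LinearMap.zero_apply] at ha hb
    exact hab (Prod.ext (by simpa using ha) (by simpa using hb))
  exact Measure.addHaar_submodule volume _ hL

lemma integral_gaussianReal_prod_of_homogeneous {f : ℝ × ℝ → ℝ}
    (hf : ∀ r : ℝ, 0 < r → ∀ p, f (r • p) = r ^ 2 * f p) :
    ∫ p, f p ∂(gaussianReal 0 1).prod (gaussianReal 0 1) =
      π⁻¹ * ∫ θ in -π..π, f (cos θ, sin θ) := by
  have hpolar : ∀ q ∈ Ioi (0 : ℝ) ×ˢ Ioo (-π) π,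
      q.1 • ((2 * π)⁻¹ * exp (-((polarCoord.symm q).1 ^ 2 + (polarCoord.symm q).2 ^ 2) / 2) *
        f (polarCoord.symm q)) =
        q.1 ^ 3 * exp (-q.1 ^ 2 / 2) * ((2 * π)⁻¹ * f (cos q.2, sin q.2)) := by
    rintro ⟨r, θ⟩ ⟨hr, -⟩
    have hsymm : polarCoord.symm (r, θ) = r • (cos θ, sin θ) := by simp [Prod.smul_mk]
    have hnorm : (r * cos θ) ^ 2 + (r * sin θ) ^ 2 = r ^ 2 := by
      linear_combination r ^ 2 * sin_sq_add_cos_sq θ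
    rw [hsymm, hf r hr]
    simp only [Prod.smul_mk, smul_eq_mul, hnorm]
    ring
  rw [integral_gaussianReal_prod, ← integral_comp_polarCoord_symm, polarCoord_target,
    setIntegral_congr_fun (measurableSet_Ioi.prod measurableSet_Ioo) hpolar,
    Measure.volume_eq_prod,
    setIntegral_prod_mul (fun r => r ^ 3 * exp (-r ^ 2 / 2))
      (fun θ => (2 * π)⁻¹ * f (cos θ, sin θ)),
    integral_Ioi_pow_three_mul_exp_neg_sq_div_two,
    ← integral_Ioc_eq_integral_Ioo, ← intervalIntegral.integral_of_le (by linarith [pi_pos]),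
    intervalIntegral.integral_const_mul]
  field_simp

lemma integral_sq_mul_sq_cos_sin (a b c d : ℝ) :
    ∫ θ in -π..π, (a * cos θ + b * sin θ) ^ 2 * (c * cos θ + d * sin θ) ^ 2 =
      π / 4 * ((a ^ 2 + b ^ 2) * (c ^ 2 + d ^ 2) + 2 * (a * c + b * d) ^ 2) := by
  have hcos4 : ∫ θ in -π..π, cos θ ^ 4 = 3 * π / 4 := by
    simp [integral_cos_pow (n := 2)]; ring
  have hsin4 : ∫ θ in -π..π, sin θ ^ 4 = 3 * π / 4 := by
    simp [integral_sin_pow (n := 2)]; ring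
  have hsin2cos2 : ∫ θ in -π..π, sin θ ^ 2 * cos θ ^ 2 = π / 4 := by
    have h4 : sin (4 * π) = 0 := by exact_mod_cast sin_nat_mul_pi 4
    simp [integral_sin_sq_mul_cos_sq, h4]
    ring
  have hsincos3 : ∫ θ in -π..π, sin θ * cos θ ^ 3 = 0 := by
    simpa using integral_sin_pow_mul_cos_pow_odd (a := -π) (b := π) 1 1
  have hsin3cos : ∫ θ in -π..π, sin θ ^ 3 * cos θ = 0 := by
    simpa using integral_sin_pow_odd_mul_cos_pow (a := -π) (b := π) 1 1
  have hexpand : ∀ θ, (a * cos θ + b * sin θ) ^ 2 * (c * cos θ + d * sin θ) ^ 2 =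
      a ^ 2 * c ^ 2 * cos θ ^ 4 + (2 * a ^ 2 * c * d + 2 * a * b * c ^ 2) * (sin θ * cos θ ^ 3) +
        (a ^ 2 * d ^ 2 + 4 * a * b * c * d + b ^ 2 * c ^ 2) * (sin θ ^ 2 * cos θ ^ 2) +
        (2 * a * b * d ^ 2 + 2 * b ^ 2 * c * d) * (sin θ ^ 3 * cos θ) +
        b ^ 2 * d ^ 2 * sin θ ^ 4 :=
    fun θ => by ring
  simp (disch := apply Continuous.intervalIntegrable; fun_prop) only [hexpand,
    intervalIntegral.integral_add, intervalIntegral.integral_const_mul]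
  rw [hcos4, hsin4, hsin2cos2, hsincos3, hsin3cos]
  ring

lemma integral_map_mulVec_stdGaussian_fin_two (A : Matrix (Fin 2) (Fin 2) ℝ)
    {f : (Fin 2 → ℝ) → ℝ} (hf : Measurable f) :
    ∫ x, f x ∂(_root_.stdGaussian (Fin 2)).map A.mulVec =
      ∫ p, f (A *ᵥ ![p.1, p.2]) ∂(gaussianReal 0 1).prod (gaussianReal 0 1) := by
  rw [integral_map (by fun_prop) hf.aestronglyMeasurable, _root_.stdGaussian,
    ← (measurePreserving_finTwoArrow (gaussianReal 0 1)).symm.integral_comp']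
  rfl

lemma four_mul_inv_add_inv_sq (ρ x y : ℝ) (hx : x ≠ 0) (hy : y ≠ 0) :
    4 * (1 / x ^ 2 - 2 * ρ / (x * y) + 1 / y ^ 2)⁻¹ =
      4 * (x * y) ^ 2 / (y ^ 2 - 2 * ρ * (x * y) + x ^ 2) := by
  field_simp

lemma sq_sub_two_mul_mul_add_sq_of_unit_rows {ρ a b c d : ℝ} (h1 : a ^ 2 + b ^ 2 = 1)
    (h2 : c ^ 2 + d ^ 2 = 1) (h3 : a * c + b * d = ρ) (p q : ℝ) :
    (c * p + d * q) ^ 2 - 2 * ρ * ((a * p + b * q) * (c * p + d * q)) + (a * p + b * q) ^ 2 =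
      (1 - ρ ^ 2) * (p ^ 2 + q ^ 2) := by
  subst h3
  linear_combination
    (c * q - d * p) ^ 2 * h1 + (p ^ 2 + q ^ 2 - (a * p + b * q) ^ 2) * h2

lemma integral_gaussianReal_prod_unit_rows {ρ a b c d : ℝ} (h1 : a ^ 2 + b ^ 2 = 1)
    (h2 : c ^ 2 + d ^ 2 = 1) (h3 : a * c + b * d = ρ) :
    ∫ p, 4 * (1 / (a * p.1 + b * p.2) ^ 2 - 2 * ρ / ((a * p.1 + b * p.2) * (c * p.1 + d * p.2)) +
      1 / (c * p.1 + d * p.2) ^ 2)⁻¹ ∂(gaussianReal 0 1).prod (gaussianReal 0 1) =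
      (1 + 2 * ρ ^ 2) / (1 - ρ ^ 2) := by
  set f : ℝ × ℝ → ℝ := fun p =>
    4 / (1 - ρ ^ 2) * (((a * p.1 + b * p.2) * (c * p.1 + d * p.2)) ^ 2 / (p.1 ^ 2 + p.2 ^ 2))
  have hne {u v : ℝ} (h : u ^ 2 + v ^ 2 = 1) : (u, v) ≠ 0 := by
    intro h0
    simp only [Prod.mk_eq_zero] at h0
    simp [h0.1, h0.2] at h
  have hae : ∀ᵐ p ∂(gaussianReal 0 1).prod (gaussianReal 0 1),
      4 * (1 / (a * p.1 + b * p.2) ^ 2 - 2 * ρ / ((a * p.1 + b * p.2) * (c * p.1 + d * p.2)) +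
        1 / (c * p.1 + d * p.2) ^ 2)⁻¹ = f p := by
    filter_upwards [ae_gaussianReal_prod_ne_zero (hne h1), ae_gaussianReal_prod_ne_zero (hne h2)]
      with p hx hy
    rw [four_mul_inv_add_inv_sq ρ _ _ hx hy, sq_sub_two_mul_mul_add_sq_of_unit_rows h1 h2 h3]
    exact (div_mul_div_comm _ _ _ _).symm
  have hhom : ∀ r : ℝ, 0 < r → ∀ p, f (r • p) = r ^ 2 * f p := by
    rintro r hr ⟨p, q⟩
    simp only [f, Prod.smul_mk, smul_eq_mul]
    rw [show ((a * (r * p) + b * (r * q)) * (c * (r * p) + d * (r * q))) ^ 2 =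
        r ^ 2 * (r ^ 2 * ((a * p + b * q) * (c * p + d * q)) ^ 2) by ring,
      show (r * p) ^ 2 + (r * q) ^ 2 = r ^ 2 * (p ^ 2 + q ^ 2) by ring,
      mul_div_mul_left _ _ (pow_ne_zero 2 hr.ne')]
    ring
  have hcircle : ∀ θ, f (cos θ, sin θ) =
      4 / (1 - ρ ^ 2) * ((a * cos θ + b * sin θ) ^ 2 * (c * cos θ + d * sin θ) ^ 2) := by
    intro θ
    simp only [f, cos_sq_add_sin_sq, div_one, mul_pow]
  rw [integral_congr_ae hae, integral_gaussianReal_prod_of_homogeneous hhom]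
  simp only [hcircle, intervalIntegral.integral_const_mul, integral_sq_mul_sq_cos_sin, h1, h2, h3]
  field_simp

theorem negative_weight_expectation_general (ρ : ℝ)
    (μ : Measure (Fin 2 → ℝ)) (hμ : IsCenteredGaussian μ !![1, ρ; ρ, 1]) :
    ∫ x, 4 * (1 / (x 0) ^ 2 - 2 * ρ / (x 0 * x 1) + 1 / (x 1) ^ 2)⁻¹ ∂μ =
      (1 + 2 * ρ ^ 2) / (1 - ρ ^ 2) := by
  obtain ⟨A, hAS, rfl⟩ := hμ
  have h1 : A 0 0 ^ 2 + A 0 1 ^ 2 = 1 := by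
    simpa [Matrix.mul_apply, sq] using congrFun₂ hAS 0 0
  have h2 : A 1 0 ^ 2 + A 1 1 ^ 2 = 1 := by
    simpa [Matrix.mul_apply, sq] using congrFun₂ hAS 1 1
  have h3 : A 0 0 * A 1 0 + A 0 1 * A 1 1 = ρ := by
    simpa [Matrix.mul_apply] using congrFun₂ hAS 0 1
  rw [integral_map_mulVec_stdGaussian_fin_two A (by fun_prop)]
  simpa [mulVec, dotProduct, Fin.sum_univ_two] using integral_gaussianReal_prod_unit_rows h1 h2 h3

/-- Let `X = (X₁, X₂)ᵀ` be centered bivariate normal with unit variances and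
correlation `ρ`, `|ρ| < 1`.  Then `Q = 4·(1/X₁² − 2ρ/(X₁X₂) + 1/X₂²)⁻¹` has expected value
`E[Q] = (1 + 2ρ²)/(1 − ρ²)`; in particular, the distribution of `Q` depends on `ρ`. -/
theorem negative_weight_expectation (ρ : ℝ) (hρ : |ρ| < 1)
    (μ : Measure (Fin 2 → ℝ)) (hμ : IsCenteredGaussian μ !![1, ρ; ρ, 1]) :
    ∫ x, 4 * (1 / (x 0) ^ 2 - 2 * ρ / (x 0 * x 1) + 1 / (x 1) ^ 2)⁻¹ ∂μ =
      (1 + 2 * ρ ^ 2) / (1 - ρ ^ 2) :=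
  negative_weight_expectation_general ρ μ hμ
end
end
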